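/- arXiv:2602.23355 — 3 statements merged into one kernel-verified Lean document; each statement's English description precedes it below -/
import Mathlib

section
/- Let Y_1, Y_2, … be random vectors in ℝ^K such that √n(Y_n − μ) converges in distribution to N(0, Σ) for some μ ∈ ℝ^K and positive definite Σ ∈ ℝ^{K×K}. Let μ* = min_k μ_k, S = {k : μ_k = μ*}, Y_n* = min_k Y_{nk}, and W ~ N(0, Σ). Then: (i) min_{k∈S} √n(Y_{nk} − μ*) converges in distribution to min_{k∈S} W_k; (ii) if S^c is nonempty, min_{k∈S^c} √n(Y_{nk} − μ*) → +∞ in probability; and (iii) the sequence √n(Y_n* − μ*) is bounded in probability. -/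
open MeasureTheory Filter Topology

/-- `ν` is the multivariate normal distribution on `ℝ^K` with mean `m` and covariance
matrix `S`, characterized by the fact that every linear functional `x ↦ ∑ aᵢ xᵢ` has a
(real) Gaussian distribution with mean `∑ aᵢ mᵢ` and variance `aᵀ S a`. -/
def IsGaussianLaw {K : ℕ} (ν : Measure (EuclideanSpace ℝ (Fin K)))
    (m : EuclideanSpace ℝ (Fin K)) (S : Matrix (Fin K) (Fin K) ℝ) : Prop :=
  ∀ a : Fin K → ℝ,
    Measure.map (fun x => ∑ i, a i * x i) ν
      = ProbabilityTheory.gaussianReal (∑ i, a i * m i)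
          (Real.toNNReal (∑ i, ∑ j, a i * S i j * a j))

/-- Convergence in distribution: weak convergence of the laws, expressed through
integrals of bounded continuous functions. -/
def TendstoInDistribution {Ω E : Type*} [MeasurableSpace Ω] [MeasurableSpace E]
    [TopologicalSpace E] (P : Measure Ω) (V : ℕ → Ω → E) (ν : Measure E) : Prop :=
  ∀ f : BoundedContinuousFunction E ℝ,
    Tendsto (fun n => ∫ ω, f (V n ω) ∂P) atTop (𝓝 (∫ x, f x ∂ν))

/-- Bounded in probability (`O_p(1)`). -/
def BoundedInProb {Ω : Type*} [MeasurableSpace Ω] (P : Measure Ω)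
    (X : ℕ → Ω → ℝ) : Prop :=
  ∀ δ : ℝ, 0 < δ → ∃ M : ℝ, 0 < M ∧
    ∀ᶠ n in atTop, P {ω | M < |X n ω|} < ENNReal.ofReal δ

/-- Convergence to `+∞` in probability. -/
def TendstoInfinityInProb {Ω : Type*} [MeasurableSpace Ω] (P : Measure Ω)
    (Y : ℕ → Ω → ℝ) : Prop :=
  ∀ M : ℝ, Tendsto (fun n => P {ω | Y n ω < M}) atTop (𝓝 0)

/-!
Convergence in distribution of `Vₙ = √n (Yₙ - μ)` makes `‖Vₙ‖` bounded in probability (test it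
against a continuous cutoff of a large ball). On `S` the coordinates of `√n (Yₙ - μ*)` are those
of `Vₙ`, so (i) is the continuous mapping theorem for the minimum over `S`. Off `S`,
`√n (Yₙₖ - μ*) ≥ √n γ - ‖Vₙ‖` with `γ = min_{k ∉ S} (μₖ - μ*) > 0`, which gives (ii). Finally the
minimum of the coordinates is `1`-Lipschitz for the sup norm, so `|√n (Yₙ* - μ*)| ≤ ‖Vₙ‖`,
which gives (iii).
-/

theorem TendstoInDistribution.comp_continuous {Ω E F : Type*} [MeasurableSpace Ω]
    [TopologicalSpace E] [MeasurableSpace E] [OpensMeasurableSpace E]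
    [TopologicalSpace F] [MeasurableSpace F] [BorelSpace F] {P : Measure Ω} {V : ℕ → Ω → E}
    {ν : Measure E} (h : TendstoInDistribution P V ν) {g : E → F} (hg : Continuous g) :
    TendstoInDistribution P (fun n ω => g (V n ω)) (ν.map g) := by
  intro f
  rw [integral_map hg.aemeasurable f.continuous.aestronglyMeasurable]
  exact h (f.compContinuous ⟨g, hg⟩)

section Tightness

variable {Ω E : Type*} [MeasurableSpace Ω] [SeminormedAddCommGroup E]

def normCutoff (c : ℝ) : BoundedContinuousFunction E ℝ :=
  BoundedContinuousFunction.ofNormedAddCommGroup (fun x => max 0 (min 1 (c + 1 - ‖x‖)))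
    (by fun_prop) 1 fun x => abs_le.2
      ⟨(neg_nonpos.2 zero_le_one).trans (le_max_left _ _), max_le zero_le_one (min_le_left _ _)⟩

theorem normCutoff_apply (c : ℝ) (x : E) : normCutoff c x = max 0 (min 1 (c + 1 - ‖x‖)) :=
  rfl

theorem normCutoff_nonneg (c : ℝ) (x : E) : 0 ≤ normCutoff c x :=
  le_max_left _ _

theorem normCutoff_le_one (c : ℝ) (x : E) : normCutoff c x ≤ 1 :=
  max_le zero_le_one (min_le_left _ _)

theorem norm_normCutoff_le (c : ℝ) (x : E) : ‖normCutoff c x‖ ≤ 1 := by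
  rw [Real.norm_of_nonneg (normCutoff_nonneg c x)]
  exact normCutoff_le_one c x

theorem normCutoff_eq_one {c : ℝ} {x : E} (hx : ‖x‖ ≤ c) : normCutoff c x = 1 := by
  rw [normCutoff_apply, min_eq_left (by linarith), max_eq_right zero_le_one]

theorem normCutoff_eq_zero {c : ℝ} {x : E} (hx : c + 1 ≤ ‖x‖) : normCutoff c x = 0 := by
  rw [normCutoff_apply, min_eq_right (by linarith), max_eq_left (by linarith)]

theorem tendsto_integral_normCutoff [MeasurableSpace E] [OpensMeasurableSpace E]
    (ν : Measure E) [IsProbabilityMeasure ν] :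
    Tendsto (fun c => ∫ x, normCutoff c x ∂ν) atTop (𝓝 1) := by
  have h : Tendsto (fun c => ∫ x, normCutoff c x ∂ν) atTop (𝓝 (∫ _, (1 : ℝ) ∂ν)) := by
    refine tendsto_integral_filter_of_dominated_convergence (fun _ => 1)
      (.of_forall fun c => (normCutoff c).continuous.aestronglyMeasurable)
      (.of_forall fun c => .of_forall fun x => norm_normCutoff_le c x)
      (integrable_const 1) (.of_forall fun x => ?_)
    exact tendsto_const_nhds.congr' <|
      (eventually_ge_atTop ‖x‖).mono fun c hc => (normCutoff_eq_one hc).symm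
  simpa using h

theorem measure_le_ofReal_one_sub_integral (P : Measure Ω) [IsProbabilityMeasure P]
    {g : Ω → ℝ} (hg : ∀ ω, g ω ≤ 1) {A : Set Ω} (hA : ∀ ω ∈ A, g ω ≤ 0) :
    P A ≤ ENNReal.ofReal (1 - ∫ ω, g ω ∂P) := by
  by_cases hint : Integrable g P
  · have hmarkov := mul_meas_ge_le_integral_of_nonneg (μ := P) (f := fun ω => 1 - g ω)
      (.of_forall fun ω => sub_nonneg.2 (hg ω)) ((integrable_const 1).sub hint) 1
    rw [one_mul, integral_sub (integrable_const 1) hint, integral_const, probReal_univ,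
      one_smul] at hmarkov
    calc P A ≤ P {ω | 1 ≤ 1 - g ω} :=
          measure_mono fun ω hω => show 1 ≤ 1 - g ω by linarith [hA ω hω]
      _ = ENNReal.ofReal (P.real {ω | 1 ≤ 1 - g ω}) :=
          (ofReal_measureReal (measure_ne_top P _)).symm
      _ ≤ ENNReal.ofReal (1 - ∫ ω, g ω ∂P) := ENNReal.ofReal_le_ofReal hmarkov
  · -- the junk value `∫ g = 0` leaves the trivial bound `P A ≤ 1`
    rw [integral_undef hint, sub_zero, ENNReal.ofReal_one]
    exact prob_le_one

theorem TendstoInDistribution.boundedInProb_norm [MeasurableSpace E] [OpensMeasurableSpace E]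
    {P : Measure Ω} [IsProbabilityMeasure P] {V : ℕ → Ω → E} {ν : Measure E}
    [IsProbabilityMeasure ν] (h : TendstoInDistribution P V ν) :
    BoundedInProb P (fun n ω => ‖V n ω‖) := by
  intro δ hδ
  obtain ⟨c, hc, hc0⟩ := (((tendsto_integral_normCutoff ν).eventually
    (lt_mem_nhds (by linarith : 1 - δ < 1))).and (eventually_ge_atTop 0)).exists
  refine ⟨c + 1, by linarith, ?_⟩
  filter_upwards [(h (normCutoff c)).eventually (lt_mem_nhds hc)] with n hn
  calc P {ω | c + 1 < |‖V n ω‖|}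
      ≤ ENNReal.ofReal (1 - ∫ ω, normCutoff c (V n ω) ∂P) :=
        measure_le_ofReal_one_sub_integral P (fun ω => normCutoff_le_one c (V n ω))
          fun ω (hω : c + 1 < |‖V n ω‖|) =>
            (normCutoff_eq_zero (abs_norm (V n ω) ▸ hω).le).le
    _ < ENNReal.ofReal δ := (ENNReal.ofReal_lt_ofReal_iff hδ).2 (by linarith)

end Tightness

section BoundedInProb

variable {Ω : Type*} [MeasurableSpace Ω] {P : Measure Ω} {X Z : ℕ → Ω → ℝ}

theorem BoundedInProb.of_abs_le (hZ : BoundedInProb P Z) (h : ∀ n ω, |X n ω| ≤ |Z n ω|) :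
    BoundedInProb P X := by
  intro δ hδ
  obtain ⟨M, hM, hev⟩ := hZ δ hδ
  exact ⟨M, hM, hev.mono fun n hn =>
    (measure_mono fun ω (hω : M < |X n ω|) => hω.trans_le (h n ω)).trans_lt hn⟩

theorem BoundedInProb.tendstoInfinityInProb_of_le (hZ : BoundedInProb P Z) {a : ℕ → ℝ}
    (ha : Tendsto a atTop atTop) (h : ∀ n ω, a n - |Z n ω| ≤ X n ω) :
    TendstoInfinityInProb P X := by
  intro M
  rw [ENNReal.tendsto_nhds_zero]
  intro ε hε
  obtain ⟨δ, -, hδ, hδε⟩ := ENNReal.lt_iff_exists_real_btwn.1 hε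
  obtain ⟨R, -, hR⟩ := hZ δ (ENNReal.ofReal_pos.1 hδ)
  filter_upwards [hR, ha.eventually_ge_atTop (M + R)] with n hn han
  refine (measure_mono fun ω (hω : X n ω < M) => ?_).trans (hn.trans hδε).le
  show R < |Z n ω|
  linarith [h n ω]

end BoundedInProb

section FiniteMin

variable {ι : Type*}

theorem continuous_sInf_image_of_finite {X : Type*} [TopologicalSpace X] {s : Set ι}
    (hs : s.Finite) {f : ι → X → ℝ} (hf : ∀ i, Continuous (f i)) :
    Continuous fun x => sInf ((fun i => f i x) '' s) := by
  rcases s.eq_empty_or_nonempty with rfl | hne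
  · simpa using continuous_const
  · have hne' : hs.toFinset.Nonempty := hs.toFinset_nonempty.2 hne
    have h : ∀ x, sInf ((fun i => f i x) '' s) = hs.toFinset.inf' hne' fun i => f i x :=
      fun x => by rw [Finset.inf'_eq_csInf_image, hs.coe_toFinset]
    simp_rw [h]
    exact Continuous.finset_inf'_apply hne' fun i _ => hf i

variable [Finite ι]

theorem exists_pos_ciInf_add_le (m : ι → ℝ) (hne : {k | m k = ⨅ j, m j}ᶜ.Nonempty) :
    ∃ g > 0, ∀ k ∈ {k | m k = ⨅ j, m j}ᶜ, (⨅ j, m j) + g ≤ m k := by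
  obtain ⟨k₁, hk₁, hmin⟩ := Set.exists_min_image _ m (Set.toFinite _) hne
  have hle : (⨅ j, m j) ≤ m k₁ := ciInf_le (Set.finite_range m).bddBelow k₁
  exact ⟨m k₁ - ⨅ j, m j, sub_pos.2 (hle.lt_of_ne (Ne.symm hk₁)),
    fun k hk => by linarith [hmin k hk]⟩

variable [Nonempty ι]

theorem ciInf_sub_ciInf_le {a b : ι → ℝ} {r : ℝ} (h : ∀ k, a k - b k ≤ r) :
    (⨅ k, a k) - ⨅ k, b k ≤ r := by
  have : (⨅ k, a k) - r ≤ ⨅ k, b k :=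
    le_ciInf fun k => by linarith [ciInf_le (Set.finite_range a).bddBelow k, h k]
  linarith

theorem abs_ciInf_sub_ciInf_le {a b : ι → ℝ} {r : ℝ} (h : ∀ k, |a k - b k| ≤ r) :
    |(⨅ k, a k) - ⨅ k, b k| ≤ r :=
  abs_sub_le_iff.2 ⟨ciInf_sub_ciInf_le fun k => (abs_sub_le_iff.1 (h k)).1,
    ciInf_sub_ciInf_le fun k => (abs_sub_le_iff.1 (h k)).2⟩

end FiniteMin

theorem stmt7_general {K : ℕ} (hK : 1 ≤ K)
    {Ω : Type*} [MeasurableSpace Ω] (P : Measure Ω) [IsProbabilityMeasure P]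
    (Y : ℕ → Ω → EuclideanSpace ℝ (Fin K))
    (μ : EuclideanSpace ℝ (Fin K))
    (ν : Measure (EuclideanSpace ℝ (Fin K))) [IsProbabilityMeasure ν]
    (hclt : TendstoInDistribution P
      (fun n ω => (Real.sqrt n) • (Y n ω - μ)) ν) :
    (TendstoInDistribution P
        (fun n ω => sInf ((fun k => Real.sqrt n * (Y n ω k - sInf (Set.range fun j => μ j)))
            '' {k | μ k = sInf (Set.range fun j => μ j)}))
        (Measure.map
          (fun x : EuclideanSpace ℝ (Fin K) =>
            sInf ((fun k => x k) '' {k | μ k = sInf (Set.range fun j => μ j)})) ν)) ∧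
    (({k | μ k = sInf (Set.range fun j => μ j)}ᶜ : Set (Fin K)).Nonempty →
      TendstoInfinityInProb P
        (fun n ω => sInf ((fun k => Real.sqrt n * (Y n ω k - sInf (Set.range fun j => μ j)))
            '' {k | μ k = sInf (Set.range fun j => μ j)}ᶜ))) ∧
    BoundedInProb P
      (fun n ω => Real.sqrt n *
        (sInf (Set.range fun k => Y n ω k) - sInf (Set.range fun j => μ j))) := by
  have : Nonempty (Fin K) := ⟨⟨0, hK⟩⟩
  set V := fun (n : ℕ) ω => Real.sqrt n • (Y n ω - μ)
  have hVapply (n ω k) : V n ω k = Real.sqrt n * (Y n ω k - μ k) := by simp [V]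
  have hVle (n ω k) : |V n ω k| ≤ ‖V n ω‖ := PiLp.norm_apply_le (V n ω) k
  have hbdd := hclt.boundedInProb_norm
  refine ⟨?_, fun hne => ?_, ?_⟩
  · convert hclt.comp_continuous (continuous_sInf_image_of_finite (Set.toFinite
      {k | μ k = sInf (Set.range fun j => μ j)}) (f := fun k x => x k)
      fun k => (EuclideanSpace.proj k).continuous)
      using 3 with n ω
    exact congrArg sInf (Set.image_congr fun k (hk : μ k = _) => by simp [hVapply, hk])
  · obtain ⟨g, hg, hgap⟩ := exists_pos_ciInf_add_le (fun j => μ j) hne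
    refine hbdd.tendstoInfinityInProb_of_le
      ((Real.tendsto_sqrt_atTop.comp tendsto_natCast_atTop_atTop).atTop_mul_const hg)
      fun n ω => le_csInf (hne.image _) (Set.forall_mem_image.2 fun k hk => ?_)
    have hμk := mul_le_mul_of_nonneg_left (hgap k hk) (Real.sqrt_nonneg n)
    have hYk := (neg_le_neg (hVle n ω k)).trans ((neg_abs_le _).trans_eq (hVapply n ω k))
    show Real.sqrt n * g - |‖V n ω‖| ≤ Real.sqrt n * (Y n ω k - ⨅ j, μ j)
    rw [abs_norm]
    linarith
  · refine hbdd.of_abs_le fun n ω => ?_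
    show |Real.sqrt n * ((⨅ k, Y n ω k) - ⨅ j, μ j)| ≤ |‖V n ω‖|
    rw [abs_norm, mul_sub, Real.mul_iInf_of_nonneg (Real.sqrt_nonneg _),
      Real.mul_iInf_of_nonneg (Real.sqrt_nonneg _)]
    exact abs_ciInf_sub_ciInf_le fun k => by rw [← mul_sub, ← hVapply]; exact hVle n ω k

/-- Suppose `√n (Y_n − μ) ⇒ N(0, Σ)` with `Σ` positive definite.  Let
`μ* = min_k μ_k`, `S = {k : μ_k = μ*}` and `Y_n* = min_k Y_{nk}`.  Then
(i) `min_{k ∈ S} √n (Y_{nk} − μ*)` converges in distribution to `min_{k ∈ S} W_k`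
    where `W ∼ N(0, Σ)`;
(ii) if `Sᶜ ≠ ∅`, then `min_{k ∈ Sᶜ} √n (Y_{nk} − μ*) → +∞` in probability;
(iii) `√n (Y_n* − μ*)` is bounded in probability. -/
theorem stmt7 {K : ℕ} (hK : 1 ≤ K)
    {Ω : Type*} [MeasurableSpace Ω] (P : Measure Ω) [IsProbabilityMeasure P]
    (Y : ℕ → Ω → EuclideanSpace ℝ (Fin K))
    (μ : EuclideanSpace ℝ (Fin K)) (Sig : Matrix (Fin K) (Fin K) ℝ) (hSig : Sig.PosDef)
    (ν : Measure (EuclideanSpace ℝ (Fin K))) [IsProbabilityMeasure ν]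
    (hν : IsGaussianLaw ν 0 Sig)
    (hclt : TendstoInDistribution P
      (fun n ω => (Real.sqrt n) • (Y n ω - μ)) ν) :
    (TendstoInDistribution P
        (fun n ω => sInf ((fun k => Real.sqrt n * (Y n ω k - sInf (Set.range fun j => μ j)))
            '' {k | μ k = sInf (Set.range fun j => μ j)}))
        (Measure.map
          (fun x : EuclideanSpace ℝ (Fin K) =>
            sInf ((fun k => x k) '' {k | μ k = sInf (Set.range fun j => μ j)})) ν)) ∧
    (({k | μ k = sInf (Set.range fun j => μ j)}ᶜ : Set (Fin K)).Nonempty →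
      TendstoInfinityInProb P
        (fun n ω => sInf ((fun k => Real.sqrt n * (Y n ω k - sInf (Set.range fun j => μ j)))
            '' {k | μ k = sInf (Set.range fun j => μ j)}ᶜ))) ∧
    BoundedInProb P
      (fun n ω => Real.sqrt n *
        (sInf (Set.range fun k => Y n ω k) - sInf (Set.range fun j => μ j))) :=
  stmt7_general hK P Y μ ν hclt
end

section
/- Fix an integer K ≥ 1, a tolerance δ > 0, and a complexity function c : {1, …, K} → [0, ∞). For μ ∈ ℝ^K define the δ-optimal set M_δ(μ) = {k : μ_k ≤ min_j μ_j + δ} and the minimal δ-optimal complexity c_δ*(μ) = min{c(k) : k ∈ M_δ(μ)}. Then the function μ ↦ c_δ*(μ) is continuous at every point μ ∈ ℝ^K such that δ ≠ μ_k − min_j μ_j for all k ∈ {1, …, K}. -/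
open Set

/-- The minimum coordinate `min_j μ_j`. -/
noncomputable def minCoord {K : ℕ} (μ : EuclideanSpace ℝ (Fin K)) : ℝ :=
  sInf (Set.range fun j => μ j)

/-- The `δ`-optimal set `M_δ(μ) = {k : μ_k ≤ min_j μ_j + δ}`. -/
def deltaOptSet {K : ℕ} (δ : ℝ) (μ : EuclideanSpace ℝ (Fin K)) : Set (Fin K) :=
  {k | μ k ≤ minCoord μ + δ}

/-- The minimal `δ`-optimal complexity `c_δ*(μ) = min {c(k) : k ∈ M_δ(μ)}`. -/
noncomputable def minDeltaComplexity {K : ℕ} (c : Fin K → ℝ) (δ : ℝ)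
    (μ : EuclideanSpace ℝ (Fin K)) : ℝ :=
  sInf (c '' deltaOptSet δ μ)

lemma minCoord_eq_inf' {K : ℕ} [Nonempty (Fin K)] (μ : EuclideanSpace ℝ (Fin K)) :
    minCoord μ = Finset.univ.inf' Finset.univ_nonempty (fun j => μ j) := by
  rw [Finset.inf'_eq_csInf_image, minCoord]
  simp

lemma continuousAt_minCoord {K : ℕ} [Nonempty (Fin K)] (μ : EuclideanSpace ℝ (Fin K)) :
    ContinuousAt minCoord μ := by
  have : ContinuousAt (fun ν : EuclideanSpace ℝ (Fin K) =>
      Finset.univ.inf' Finset.univ_nonempty (fun j => ν j)) μ := by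
    apply ContinuousAt.finset_inf'_apply Finset.univ_nonempty
    intro i _
    exact (EuclideanSpace.proj i).continuous.continuousAt
  refine this.congr ?_
  filter_upwards with ν
  rw [minCoord_eq_inf']

/-- For `K ≥ 1`, `δ > 0` and a complexity function `c` with values in
`[0, ∞)`, the map `μ ↦ c_δ*(μ)` is continuous at every `μ` such that
`δ ≠ μ_k − min_j μ_j` for all `k`. -/
theorem stmt9 {K : ℕ} (hK : 1 ≤ K) (δ : ℝ) (hδ : 0 < δ)
    (c : Fin K → ℝ) (hc : ∀ k, 0 ≤ c k)
    (μ : EuclideanSpace ℝ (Fin K)) (hμ : ∀ k, δ ≠ μ k - minCoord μ) :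
    ContinuousAt (minDeltaComplexity c δ) μ := by
  have : Nonempty (Fin K) := Fin.pos_iff_nonempty.mp hK
  -- for each k, eventually membership in deltaOptSet is the same as at μ
  have hev : ∀ k : Fin K, ∀ᶠ ν in nhds μ,
      (ν k ≤ minCoord ν + δ ↔ μ k ≤ minCoord μ + δ) := by
    intro k
    have hcont : ContinuousAt (fun ν : EuclideanSpace ℝ (Fin K) =>
        ν k - minCoord ν) μ :=
      ((EuclideanSpace.proj k).continuous.continuousAt).sub (continuousAt_minCoord μ)
    rcases lt_or_gt_of_ne (fun h => (hμ k) h.symm) with h | h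
    · -- μ k - minCoord μ < δ
      have := hcont.eventually_lt continuousAt_const h
      filter_upwards [this] with ν hν
      constructor
      · intro _; linarith
      · intro _; linarith
    · have := (continuousAt_const (y := δ)).eventually_lt hcont h
      filter_upwards [this] with ν hν
      constructor
      · intro h'; linarith
      · intro h'; linarith
  have hall : ∀ᶠ ν in nhds μ, ∀ k : Fin K,
      (ν k ≤ minCoord ν + δ ↔ μ k ≤ minCoord μ + δ) :=
    Filter.eventually_all.mpr hev
  have heq : ∀ᶠ ν in nhds μ,
      minDeltaComplexity c δ ν = minDeltaComplexity c δ μ := by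
    filter_upwards [hall] with ν hν
    have hset : deltaOptSet δ ν = deltaOptSet δ μ := Set.ext fun k => hν k
    rw [minDeltaComplexity, minDeltaComplexity, hset]
  have : minDeltaComplexity c δ =ᶠ[nhds μ] fun _ => minDeltaComplexity c δ μ := heq
  exact (continuousAt_const (y := minDeltaComplexity c δ μ)).congr this.symm
end

section
/- Fix δ > 0, a complexity function c : {1, …, K} → [0, ∞), and μ⁰ ∈ ℝ^K such that δ ≠ μ⁰_k − min_j μ⁰_j for all k. Let (V_n) be random vectors in ℝ^K with V_n → μ⁰ in probability. Then P(c_δ*(V_n) = c_δ*(μ⁰)) → 1 as n → ∞. -/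
open MeasureTheory Filter Topology Set

/-!
The minimum coordinate is continuous, so away from the boundary case `μ⁰_k = min μ⁰ + δ`
each condition `μ_k ≤ min μ + δ` has the same truth value at all `μ` near `μ⁰`. Hence the
`δ`-optimal set, and with it `c_δ*`, is locally constant at `μ⁰`, and convergence in
probability puts `V_n` in such a neighbourhood with probability tending to one.
-/

theorem continuous_minCoord {K : ℕ} [Nonempty (Fin K)] :
    Continuous (minCoord : EuclideanSpace ℝ (Fin K) → ℝ) := by
  have h : (minCoord : EuclideanSpace ℝ (Fin K) → ℝ) =
      fun x => Finset.univ.inf' Finset.univ_nonempty fun j => x j := by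
    funext x
    exact (Finset.inf'_univ_eq_ciInf _).symm
  rw [h]
  exact Continuous.finset_inf'_apply _ fun j _ => (EuclideanSpace.proj j).continuous

theorem eventually_deltaOptSet_eq {K : ℕ} {δ : ℝ} {μ0 : EuclideanSpace ℝ (Fin K)}
    (hμ0 : ∀ k, δ ≠ μ0 k - minCoord μ0) :
    ∀ᶠ μ in 𝓝 μ0, deltaOptSet δ μ = deltaOptSet δ μ0 := by
  have hk : ∀ k, ∀ᶠ μ in 𝓝 μ0, (k ∈ deltaOptSet δ μ ↔ k ∈ deltaOptSet δ μ0) := by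
    intro k
    have : Nonempty (Fin K) := ⟨k⟩
    have hcont : Continuous fun μ : EuclideanSpace ℝ (Fin K) => minCoord μ + δ :=
      continuous_minCoord.add continuous_const
    have hcoord : Continuous fun μ : EuclideanSpace ℝ (Fin K) => μ k :=
      (EuclideanSpace.proj k).continuous
    rcases lt_or_gt_of_ne (fun h => hμ0 k (by linarith) : μ0 k ≠ minCoord μ0 + δ)
      with hlt | hgt
    · filter_upwards [hcoord.continuousAt.eventually_lt hcont.continuousAt hlt] with μ hμ
      exact iff_of_true hμ.le hlt.le
    · filter_upwards [hcont.continuousAt.eventually_lt hcoord.continuousAt hgt] with μ hμ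
      exact iff_of_false hμ.not_ge hgt.not_ge
  filter_upwards [eventually_all.2 hk] with μ hμ
  exact Set.ext hμ

theorem MeasureTheory.TendstoInMeasure.tendsto_measure_setOf_of_eventually
    {ι Ω E : Type*} [MeasurableSpace Ω] [PseudoMetricSpace E] {P : Measure Ω}
    [IsProbabilityMeasure P] {l : Filter ι} {V : ι → Ω → E} {x : E}
    (hV : TendstoInMeasure P V l (fun _ => x)) {p : E → Prop} (hp : ∀ᶠ y in 𝓝 x, p y) :
    Tendsto (fun n => P {ω | p (V n ω)}) l (𝓝 1) := by
  obtain ⟨ε, hε, hball⟩ := Metric.eventually_nhds_iff.1 hp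
  have hfar := tendstoInMeasure_iff_dist.1 hV ε hε
  have hlower : ∀ n, 1 - P {ω | ε ≤ dist (V n ω) x} ≤ P {ω | p (V n ω)} := by
    intro n
    rw [tsub_le_iff_right]
    have hfar_compl : {ω | p (V n ω)}ᶜ ⊆ {ω | ε ≤ dist (V n ω) x} :=
      fun ω hω => not_lt.1 fun hd => hω (hball hd)
    calc (1 : ENNReal) = P univ := measure_univ.symm
      _ ≤ P {ω | p (V n ω)} + P {ω | p (V n ω)}ᶜ := measure_univ_le_add_compl _
      _ ≤ _ := by gcongr
  have hlim : Tendsto (fun n => 1 - P {ω | ε ≤ dist (V n ω) x}) l (𝓝 1) := by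
    simpa using ENNReal.Tendsto.sub tendsto_const_nhds hfar (Or.inl ENNReal.one_ne_top)
  exact tendsto_of_tendsto_of_tendsto_of_le_of_le hlim tendsto_const_nhds hlower
    fun _ => prob_le_one

theorem stmt10_general {K : ℕ} (δ : ℝ)
    (c : Fin K → ℝ)
    (μ0 : EuclideanSpace ℝ (Fin K)) (hμ0 : ∀ k, δ ≠ μ0 k - minCoord μ0)
    {Ω : Type*} [MeasurableSpace Ω] (P : Measure Ω) [IsProbabilityMeasure P]
    (V : ℕ → Ω → EuclideanSpace ℝ (Fin K))
    (hV : TendstoInMeasure P V atTop (fun _ => μ0)) :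
    Tendsto (fun n => P {ω | minDeltaComplexity c δ (V n ω) = minDeltaComplexity c δ μ0})
      atTop (𝓝 1) := by
  refine hV.tendsto_measure_setOf_of_eventually
    (p := fun μ => minDeltaComplexity c δ μ = minDeltaComplexity c δ μ0) ?_
  filter_upwards [eventually_deltaOptSet_eq hμ0] with μ hμ
  rw [minDeltaComplexity, hμ, minDeltaComplexity]

/-- Fix `δ > 0`, a complexity function `c : Fin K → [0,∞)`, and
`μ⁰ ∈ ℝ^K` with `δ ≠ μ⁰_k − min_j μ⁰_j` for all `k`.  If `V_n → μ⁰` in probability,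
then `P(c_δ*(V_n) = c_δ*(μ⁰)) → 1`. -/
theorem stmt10 {K : ℕ} (hK : 1 ≤ K) (δ : ℝ) (hδ : 0 < δ)
    (c : Fin K → ℝ) (hc : ∀ k, 0 ≤ c k)
    (μ0 : EuclideanSpace ℝ (Fin K)) (hμ0 : ∀ k, δ ≠ μ0 k - minCoord μ0)
    {Ω : Type*} [MeasurableSpace Ω] (P : Measure Ω) [IsProbabilityMeasure P]
    (V : ℕ → Ω → EuclideanSpace ℝ (Fin K))
    (hV : TendstoInMeasure P V atTop (fun _ => μ0)) :
    Tendsto (fun n => P {ω | minDeltaComplexity c δ (V n ω) = minDeltaComplexity c δ μ0})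
      atTop (𝓝 1) :=
  stmt10_general δ c μ0 hμ0 P V hV
end
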